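/- arXiv:math/0402012 — 8 statements merged into one kernel-verified Lean document; each statement's English description precedes it below -/
import Mathlib

section
/- Let (n,t) be a chart. Then every orbit of t on {-n,...,-1,1,...,n} has an even number of elements. -/
/-- Model of `X_n = {-n,...,-1,1,...,n}`: an element `±k` is encoded as
`(k mod n, sign)` with `true` meaning `+`.  Negation flips the sign. -/
abbrev Xn (n : ℕ) := ZMod n × Bool

/-- The negation map `k ↦ -k` on `X_n`. -/
def negX {n : ℕ} (p : Xn n) : Xn n := (p.1, !p.2)

/-- `(n, t)` is a chart: for every `k ∈ X_n` some integer power of `t` sends `k` to `-k`. -/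
def IsChart {n : ℕ} (t : Equiv.Perm (Xn n)) : Prop :=
  ∀ k : Xn n, ∃ s : ℤ, (t ^ s) k = negX k

/-! A chart's orbits are stable under `k ↦ -k`, which has no fixed points; a set carrying a
fixed-point-free involution splits into pairs `{x, -x}`. -/

open Function

/-- For infinite `S` this holds only through the junk value `S.ncard = 0`. -/
theorem Set.even_ncard_of_involutive {α : Type*} {f : α → α} {S : Set α} (hf : Involutive f)
    (hS : Set.MapsTo f S S) (hfix : ∀ x ∈ S, f x ≠ x) : Even S.ncard := by
  rcases S.finite_or_infinite with hfin | hinf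
  · classical
    have := hfin.fintype
    let σ : Equiv.Perm S := Involutive.toPerm (hS.restrict f S S) fun x => Subtype.ext (hf x)
    have hσ : σ ^ 2 = 1 := Equiv.ext fun x => Subtype.ext (hf x)
    have hsupp : σ.support = Finset.univ :=
      Finset.eq_univ_of_forall fun x => Equiv.Perm.mem_support.mpr fun h =>
        hfix x x.2 (congrArg Subtype.val h)
    rw [← Nat.card_coe_set_eq, Nat.card_eq_fintype_card, ← Finset.card_univ, ← hsupp]
    exact even_iff_two_dvd.mpr (Equiv.Perm.two_dvd_card_support hσ)
  · rw [hinf.ncard]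
    exact Even.zero

theorem negX_involutive {n : ℕ} : Involutive (negX (n := n)) := fun p => by
  simp [negX]

theorem negX_ne_self {n : ℕ} (p : Xn n) : negX p ≠ p := fun h => by
  simpa [negX] using congrArg Prod.snd h

theorem IsChart.mapsTo_negX_orbit {n : ℕ} {t : Equiv.Perm (Xn n)} (ht : IsChart t) (a : Xn n) :
    Set.MapsTo negX {x | ∃ s : ℤ, (t ^ s) a = x} {x | ∃ s : ℤ, (t ^ s) a = x} := by
  rintro _ ⟨s, rfl⟩
  obtain ⟨s', hs'⟩ := ht ((t ^ s) a)
  exact ⟨s' + s, by rw [zpow_add, Equiv.Perm.mul_apply, hs']⟩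

theorem stmt2_general (n : ℕ) (t : Equiv.Perm (Xn n)) (ht : IsChart t) :
    ∀ a : Xn n, Even (Set.ncard {x : Xn n | ∃ s : ℤ, (t ^ s) a = x}) := fun a =>
  Set.even_ncard_of_involutive negX_involutive (ht.mapsTo_negX_orbit a) fun x _ => negX_ne_self x

/-- every orbit of a chart has an even number of elements. -/
theorem stmt2 (n : ℕ) (hn : 1 ≤ n) (t : Equiv.Perm (Xn n)) (ht : IsChart t) :
    ∀ a : Xn n, Even (Set.ncard {x : Xn n | ∃ s : ℤ, (t ^ s) a = x}) :=
  stmt2_general n t ht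
end

section
/- Let (n,t) be a chart with n ≥ 1 and m ≥ 1. Let k_m be the number of orbits of t consisting of exactly 2m elements. Then the order of the automorphism group Aut(t) of the chart divides m·k_m. -/
/-- The circular permutation `σ_n : ±k ↦ ±(k+1)` (indices mod `n`). -/
def sigmaC (n : ℕ) : Equiv.Perm (Xn n) :=
  (Equiv.addRight (1 : ZMod n)).prodCongr (Equiv.refl Bool)

/-!
Let `P` be the set of points of sign `+` whose `t`-orbit has `2m` elements. Each such orbit is
closed under negation (this is the chart condition), so it contributes exactly `m` points to `P`,
and `|P| = m k_m`. An automorphism `σ^s` commuting with `t` preserves signs and maps `t`-orbits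
to `t`-orbits of the same size, so `Aut(t)` acts on `P`; the action is free because a power of
`σ` with a fixed point is the identity. Hence `|Aut(t)|` divides `|P|`.
-/

open Equiv Equiv.Perm MulAction

theorem MulAction.card_dvd_card_of_free {G X : Type*} [Group G] [MulAction G X]
    (hfree : ∀ (g : G) (x : X), g • x = x → g = 1) : Nat.card G ∣ Nat.card X := by
  have hstab (x : X) : stabilizer G x = ⊥ :=
    (Subgroup.eq_bot_iff_forall _).2 fun g hg => hfree g x hg
  refine Dvd.intro_left (Nat.card (orbitRel.Quotient G X)) ?_
  rw [← Nat.card_prod]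
  exact Nat.card_congr <| ((selfEquivSigmaOrbitsQuotientStabilizer G X).trans <|
    (Equiv.sigmaCongrRight fun _ => (Subgroup.quotientEquivOfEq (hstab _)).trans
      QuotientGroup.quotientBot.toEquiv).trans (Equiv.sigmaEquivProd _ _)).symm

theorem Nat.card_eq_card_mul_of_card_fiber {α β : Type*} [Finite α] [Finite β] (f : α → β)
    {m : ℕ} (h : ∀ b, Nat.card {a // f a = b} = m) : Nat.card α = Nat.card β * m := by
  cases nonempty_fintype β
  rw [← Nat.card_congr (Equiv.sigmaFiberEquiv f), Nat.card_sigma,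
    Finset.sum_congr rfl fun b _ => h b, Finset.sum_const, smul_eq_mul, Finset.card_univ,
    Nat.card_eq_fintype_card]

theorem card_eq_two_mul_card_true_of_flip_mem {α : Type*} {O : Set (α × Bool)}
    (hO : ∀ x ∈ O, (x.1, !x.2) ∈ O) :
    Nat.card O = 2 * Nat.card {x // x ∈ O ∧ x.2 = true} := by
  have hmk : ∀ x ∈ O, ∀ b, (x.1, b) ∈ O := by
    intro x hx b
    by_cases hb : b = x.2
    · exact hb ▸ hx
    · exact (Bool.eq_not_of_ne hb) ▸ hO x hx
  let e : O ≃ Bool × {x // x ∈ O ∧ x.2 = true} :=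
    { toFun := fun x => (x.1.2, ⟨(x.1.1, true), hmk _ x.2 _, rfl⟩)
      invFun := fun p => ⟨(p.2.1.1, p.1), hmk _ p.2.2.1 _⟩
      left_inv := fun x => rfl
      right_inv := fun p => Prod.ext rfl (Subtype.ext (Prod.ext rfl p.2.2.2.symm)) }
  rw [Nat.card_congr e, Nat.card_prod, Nat.card_eq_fintype_card, Fintype.card_bool]

theorem Equiv.Perm.setOf_sameCycle_apply_of_commute {α : Type*} {f g : Perm α}
    (h : Commute g f) (x : α) : {y | f.SameCycle (g x) y} = g '' {y | f.SameCycle x y} := by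
  ext y
  have hconj := sameCycle_conj (f := f) (g := g) (x := g x) (y := y)
  rw [h.mul_inv_cancel] at hconj
  simpa [Equiv.image_eq_preimage_symm, Perm.inv_def] using hconj

theorem Equiv.Perm.setOf_sameCycle_eq {α : Type*} {f : Perm α} {a x : α} (h : f.SameCycle a x) :
    {y | f.SameCycle x y} = {y | f.SameCycle a y} :=
  Set.ext fun _ => ⟨h.trans, h.symm.trans⟩

theorem sigmaC_zpow_apply (n : ℕ) (s : ℤ) (x : Xn n) : (sigmaC n ^ s) x = (x.1 + s, x.2) := by
  induction s using Int.induction_on with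
  | zero => simp
  | succ k ih =>
    rw [add_comm, zpow_one_add, Perm.mul_apply, ih]
    simp [sigmaC]
    ring
  | pred k ih =>
    rw [sub_eq_neg_add, zpow_add, zpow_neg_one, Perm.mul_apply, ih, Perm.inv_eq_iff_eq]
    simp [sigmaC]
    ring

theorem eq_one_of_mem_zpowers_sigmaC {n : ℕ} {g : Perm (Xn n)}
    (hg : g ∈ Subgroup.zpowers (sigmaC n)) {x : Xn n} (hx : g x = x) : g = 1 := by
  obtain ⟨s, rfl⟩ := Subgroup.mem_zpowers_iff.1 hg
  have hs : (s : ZMod n) = 0 := by simpa [sigmaC_zpow_apply] using congrArg Prod.fst hx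
  ext y <;> simp [sigmaC_zpow_apply, hs]

def chartAut {n : ℕ} (t : Perm (Xn n)) : Subgroup (Perm (Xn n)) :=
  Subgroup.zpowers (sigmaC n) ⊓ Subgroup.centralizer {t}

theorem coe_chartAut {n : ℕ} (t : Perm (Xn n)) :
    (chartAut t : Set (Perm (Xn n))) = {φ | (∃ s : ℤ, φ = sigmaC n ^ s) ∧ φ * t = t * φ} := by
  ext φ
  simp [chartAut, Subgroup.mem_zpowers_iff, Subgroup.mem_centralizer_singleton_iff, eq_comm]

theorem chartAut_eq_one_of_smul_eq {n : ℕ} {t : Perm (Xn n)} {g : chartAut t} {x : Xn n}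
    (h : g • x = x) : g = 1 :=
  Subtype.ext (eq_one_of_mem_zpowers_sigmaC (Subgroup.mem_inf.1 g.2).1 h)

def positiveOrbitPoints {n : ℕ} (t : Perm (Xn n)) (m : ℕ) :
    SubMulAction (chartAut t) (Xn n) where
  carrier := {x | x.2 = true ∧ {y | t.SameCycle x y}.ncard = 2 * m}
  smul_mem' := by
    rintro g x ⟨hpos, hcard⟩
    obtain ⟨hσ, hcomm⟩ := Subgroup.mem_inf.1 g.2
    obtain ⟨s, hs⟩ := Subgroup.mem_zpowers_iff.1 hσ
    rw [Subgroup.mem_centralizer_singleton_iff] at hcomm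
    refine ⟨by simpa [Subgroup.smul_def, ← hs, sigmaC_zpow_apply] using hpos, ?_⟩
    rw [Subgroup.smul_def, Perm.smul_def,
      setOf_sameCycle_apply_of_commute hcomm, Set.ncard_image_of_injective _ (Equiv.injective _),
      hcard]

theorem card_positiveOrbitPoints {n : ℕ} [NeZero n] {t : Perm (Xn n)} (ht : IsChart t) (m : ℕ) :
    Nat.card (positiveOrbitPoints t m) = m * Set.ncard {O : Set (Xn n) |
        (∃ a : Xn n, O = {x | ∃ s : ℤ, (t ^ s) a = x}) ∧ O.ncard = 2 * m} := by
  set S := {O : Set (Xn n) | (∃ a : Xn n, O = {x | ∃ s : ℤ, (t ^ s) a = x}) ∧ O.ncard = 2 * m}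
  let orbit : positiveOrbitPoints t m → S := fun x => ⟨{y | t.SameCycle x y}, ⟨x, rfl⟩, x.2.2⟩
  rw [← Nat.card_coe_set_eq, mul_comm]
  refine Nat.card_eq_card_mul_of_card_fiber orbit fun O => ?_
  obtain ⟨⟨a, ha⟩, hcard⟩ := O.2
  replace ha : O.1 = {y | t.SameCycle a y} := ha
  have hfiber (x : Xn n) : (x ∈ positiveOrbitPoints t m ∧ {y | t.SameCycle x y} = O.1) ↔
      x ∈ O.1 ∧ x.2 = true := by
    rw [ha]
    constructor
    · rintro ⟨⟨hpos, -⟩, hx⟩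
      exact ⟨hx ▸ SameCycle.refl t x, hpos⟩
    · rintro ⟨hx, hpos⟩
      have horbit := setOf_sameCycle_eq hx
      exact ⟨⟨hpos, horbit ▸ ha ▸ hcard⟩, horbit⟩
  have hflip : ∀ x ∈ O.1, (x.1, !x.2) ∈ O.1 := by
    rw [ha]
    exact fun x hx => hx.trans (ht x)
  have hsplit := card_eq_two_mul_card_true_of_flip_mem hflip
  rw [Nat.card_coe_set_eq, hcard] at hsplit
  calc Nat.card {p // orbit p = O}
      = Nat.card {x // x ∈ O.1 ∧ x.2 = true} := Nat.card_congr <|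
        ((Equiv.subtypeEquivRight fun _ => Subtype.ext_iff).trans
          (Equiv.subtypeSubtypeEquivSubtypeInter (· ∈ positiveOrbitPoints t m)
            (fun x => {y | t.SameCycle x y} = O.1))).trans (Equiv.subtypeEquivRight hfiber)
    _ = m := (Nat.mul_left_cancel two_pos hsplit).symm

theorem stmt4_general (n m : ℕ) (hn : 1 ≤ n) (t : Equiv.Perm (Xn n)) (ht : IsChart t) :
    Set.ncard {φ : Equiv.Perm (Xn n) | (∃ s : ℤ, φ = sigmaC n ^ s) ∧ φ * t = t * φ} ∣
      m * Set.ncard {O : Set (Xn n) |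
        (∃ a : Xn n, O = {x | ∃ s : ℤ, (t ^ s) a = x}) ∧ O.ncard = 2 * m} := by
  have : NeZero n := ⟨by omega⟩
  rw [← coe_chartAut, ← Nat.card_coe_set_eq, ← card_positiveOrbitPoints ht m]
  exact MulAction.card_dvd_card_of_free fun _ _ h =>
    chartAut_eq_one_of_smul_eq (congrArg Subtype.val h)

/-- `|Aut(t)|` divides `m·k_m`, where `k_m` is the number of orbits of `t`
with exactly `2m` elements. -/
theorem stmt4 (n m : ℕ) (hn : 1 ≤ n) (hm : 1 ≤ m) (t : Equiv.Perm (Xn n)) (ht : IsChart t) :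
    Set.ncard {φ : Equiv.Perm (Xn n) | (∃ s : ℤ, φ = sigmaC n ^ s) ∧ φ * t = t * φ} ∣
      m * Set.ncard {O : Set (Xn n) |
        (∃ a : Xn n, O = {x | ∃ s : ℤ, (t ^ s) a = x}) ∧ O.ncard = 2 * m} :=
  stmt4_general n m hn t ht
end

section
/- Let n ≥ 1 and let t be a straight chart, i.e., a chart with t(-k) = -t(k) for all k. Define v : {1,...,n} → {1,...,n} by v(k), = |t(k)|, and S = {k ∈ {1,...,n} : t(k) < 0}. Then v is a bijection and S meets each orbit of v in an odd number of elements. -/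
/-! Write `v = absMap t` and `σ = signAt t`, so that `S = {k | σ k = false}`. Straightness forces
`t (k, b) = (v k, b == σ k)`, so `v` is a bijection and iterating `t` from `(a, +)` walks along
the `v`-orbit of `a`, flipping the sign at each element of `S`. If the orbit, of length `m`, met
`S` in an even number of elements, then `t^m` would fix `(a, +)`, and the only point of the
`t`-orbit of `(a, +)` lying over `a` would be `(a, +)` itself; but the chart condition puts
`(a, -)` on that orbit. -/

open Function Equiv

theorem Function.ncard_setOf_iterate_and_eq_count {β : Type*} {f : β → β} {x : β}
    (hx : 0 < minimalPeriod f x) (P : β → Prop) [DecidablePred P] :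
    {y | (∃ s, f^[s] x = y) ∧ P y}.ncard =
      Nat.count (fun i => P (f^[i] x)) (minimalPeriod f x) := by
  have hset : {y | (∃ s, f^[s] x = y) ∧ P y} =
      (f^[·] x) '' ↑({i ∈ Finset.range (minimalPeriod f x) | P (f^[i] x)}) := by
    ext y
    simp only [Set.mem_ofPred_eq, Set.mem_image, Finset.coe_filter, Finset.mem_range]
    constructor
    · rintro ⟨⟨s, rfl⟩, hy⟩
      exact ⟨s % minimalPeriod f x, ⟨Nat.mod_lt s hx, by rwa [iterate_mod_minimalPeriod_eq]⟩,
        iterate_mod_minimalPeriod_eq⟩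
    · rintro ⟨i, ⟨-, hi⟩, rfl⟩
      exact ⟨⟨i, rfl⟩, hi⟩
  rw [hset, Set.InjOn.ncard_image, Set.ncard_coe_finset, Nat.count_eq_card_filter_range]
  exact iterate_injOn_Iio_minimalPeriod.mono fun i hi =>
    Finset.mem_range.mp (Finset.mem_filter.mp hi).1

namespace StraightChart

variable {α : Type*}

def absMap (t : Perm (α × Bool)) (k : α) : α := (t (k, true)).1

def signAt (t : Perm (α × Bool)) (k : α) : Bool := (t (k, true)).2

variable {t : Perm (α × Bool)} (ht : Function.Commute (Prod.map id not) t)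
include ht

theorem apply_eq (k : α) (b : Bool) : t (k, b) = (absMap t k, b == signAt t k) := by
  cases b
  · have h := ht (k, true)
    simp only [Prod.map_apply, id, Bool.not_true] at h
    rw [← h, Prod.map_apply]
    simp [absMap, signAt]
  · simp [absMap, signAt]

theorem absMap_bijective : Bijective (absMap t) := by
  refine ⟨fun k k' h => ?_, fun x => ?_⟩
  · have : t (k, true) = t (k', signAt t k == signAt t k') := by
      rw [apply_eq ht, apply_eq ht, h]
      cases signAt t k <;> cases signAt t k' <;> rfl
    exact congrArg Prod.fst (t.injective this)
  · obtain ⟨⟨k, b⟩, hk⟩ := t.surjective (x, true)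
    exact ⟨k, by rw [apply_eq ht] at hk; exact congrArg Prod.fst hk⟩

theorem iterate_apply_true (a : α) (m : ℕ) :
    (⇑t)^[m] (a, true) = ((absMap t)^[m] a,
      decide (Even (Nat.count (fun i => signAt t ((absMap t)^[i] a) = false) m))) := by
  induction m with
  | zero => simp
  | succ m ih =>
    rw [iterate_succ_apply', ih, apply_eq ht, iterate_succ_apply', Nat.count_succ]
    congr 1
    cases signAt t ((absMap t)^[m] a) <;> simp [Nat.even_add_one, ← Nat.not_odd_iff_even]

theorem exists_iterate_eq_of_zpow {a : α} {s : ℤ} (hs : (t ^ s) (a, true) = (a, false)) :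
    ∃ k : ℕ, (⇑t)^[k] (a, true) = (a, false) := by
  obtain ⟨k, rfl | rfl⟩ := Int.eq_nat_or_neg s
  · exact ⟨k, by rwa [Perm.iterate_eq_pow, ← zpow_natCast]⟩
  · have hback : (⇑t)^[k] (a, false) = (a, true) := by
      rw [← hs, Perm.iterate_eq_pow, zpow_neg, zpow_natCast, ← Perm.mul_apply, mul_inv_cancel,
        Perm.one_apply]
    refine ⟨k, ?_⟩
    simpa [hback] using ((ht.iterate_right k) (a, false)).symm

variable {a : α} {k : ℕ} (hk : (⇑t)^[k] (a, true) = (a, false))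
include hk

theorem minimalPeriod_absMap_pos : 0 < minimalPeriod (absMap t) a := by
  have hk0 : k ≠ 0 := by
    rintro rfl
    simp at hk
  have hper : (absMap t)^[k] a = a := by
    simpa [iterate_apply_true ht] using congrArg Prod.fst hk
  exact IsPeriodicPt.minimalPeriod_pos (Nat.pos_of_ne_zero hk0) hper

theorem odd_count_signAt_minimalPeriod :
    Odd (Nat.count (fun i => signAt t ((absMap t)^[i] a) = false)
      (minimalPeriod (absMap t) a)) := by
  by_contra heven
  rw [Nat.not_odd_iff_even] at heven
  have hper : IsPeriodicPt t (minimalPeriod (absMap t) a) (a, true) := by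
    simp [IsPeriodicPt, IsFixedPt, iterate_apply_true ht, iterate_minimalPeriod, heven]
  have hmod := hper.iterate_mod_apply k
  rw [hk, iterate_apply_true ht] at hmod
  have hzero : k % minimalPeriod (absMap t) a = 0 :=
    IsPeriodicPt.eq_zero_of_lt_minimalPeriod (congrArg Prod.fst hmod)
      (Nat.mod_lt _ (minimalPeriod_absMap_pos ht hk))
  simp [hzero] at hmod

end StraightChart

theorem stmt5_general (n : ℕ) (t : Equiv.Perm (Xn n)) (ht : IsChart t)
    (hstraight : ∀ p : Xn n, t (negX p) = negX (t p)) :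
    Function.Bijective (fun k : ZMod n => (t (k, true)).1) ∧
      ∀ a : ZMod n,
        Odd (Set.ncard {x : ZMod n |
          (∃ s : ℕ, (fun k : ZMod n => (t (k, true)).1)^[s] a = x) ∧
            (t (x, true)).2 = false}) := by
  have hcomm : Function.Commute (Prod.map id not) t := fun p => (hstraight p).symm
  refine ⟨StraightChart.absMap_bijective hcomm, fun a => ?_⟩
  obtain ⟨s, hs⟩ := ht (a, true)
  obtain ⟨k, hk⟩ := StraightChart.exists_iterate_eq_of_zpow hcomm hs
  have hcard := Function.ncard_setOf_iterate_and_eq_count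
    (StraightChart.minimalPeriod_absMap_pos hcomm hk) (StraightChart.signAt t · = false)
  exact hcard ▸ StraightChart.odd_count_signAt_minimalPeriod hcomm hk

/-- for a straight chart `t`, the map `v(k) = |t(k)|` on `{1,...,n}` is a
bijection and `S = {k : t(k) < 0}` meets each `v`-orbit in an odd number of elements. -/
theorem stmt5 (n : ℕ) (hn : 1 ≤ n) (t : Equiv.Perm (Xn n)) (ht : IsChart t)
    (hstraight : ∀ p : Xn n, t (negX p) = negX (t p)) :
    Function.Bijective (fun k : ZMod n => (t (k, true)).1) ∧
      ∀ a : ZMod n,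
        Odd (Set.ncard {x : ZMod n |
          (∃ s : ℕ, (fun k : ZMod n => (t (k, true)).1)^[s] a = x) ∧
            (t (x, true)).2 = false}) :=
  stmt5_general n t ht hstraight
end

section
/- Let n ≥ 1, let v be a bijection of {1,...,n}, and let S ⊆ {1,...,n} meet each orbit of v in an odd number of elements. Define t on X_n = {-n,...,-1,1,...,n} by t(k) = v(k) for k ∈ {1,...,n} \ S, t(k) = -v(k) for k ∈ S, and t(k) = -t(-k) for k < 0. Then (n,t) is a straight chart (t is a bijection, t(-k) = -t(k), and for every k there is s with t^s(k) = -k). -/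
/-- The map `t` built from a bijection `v` of `{1,...,n}` and `S ⊆ {1,...,n}`:
`t(k) = v(k)` for positive `k ∉ S`, `t(k) = -v(k)` for positive `k ∈ S`,
and `t(-k) = -t(k)` (equivalently `t(k) = -t(-k)` for `k < 0`). -/
def tOf {n : ℕ} (v : Equiv.Perm (ZMod n)) (S : Finset (ZMod n)) (p : Xn n) : Xn n :=
  (v p.1, if p.1 ∈ S then !p.2 else p.2)

/-!
Iterating `t` from `(a, ±)` follows the `v`-orbit of `a` and flips the sign once at every visit
to `S`. Since `ZMod n` is finite for `n ≥ 1`, `a` returns to itself after its minimal period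
under `v`, having visited each point of its orbit exactly once; the sign has then been flipped
an odd number of times.
-/

open Function Finset

section
variable {n : ℕ} (v : Equiv.Perm (ZMod n)) (S : Finset (ZMod n))

theorem tOf_negX (p : Xn n) : tOf v S (negX p) = negX (tOf v S p) := by
  by_cases h : p.1 ∈ S <;> simp [tOf, negX, h]

theorem tOf_bijective : Bijective (tOf v S) := by
  refine ⟨fun ⟨a, b⟩ ⟨a', b'⟩ h => ?_, fun ⟨a, b⟩ => ?_⟩
  · simp only [tOf, Prod.mk.injEq, EmbeddingLike.apply_eq_iff_eq] at h
    obtain ⟨rfl, hb⟩ := h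
    by_cases ha : a ∈ S <;> simp_all
  · refine ⟨(v.symm a, if v.symm a ∈ S then !b else b), ?_⟩
    by_cases ha : v.symm a ∈ S <;> simp [tOf, ha]

theorem tOf_iterate (a : ZMod n) (b : Bool) (s : ℕ) :
    (tOf v S)^[s] (a, b) =
      ((v ^ s) a, xor (decide (Odd #{i ∈ range s | (v ^ i) a ∈ S})) b) := by
  induction s with
  | zero => simp
  | succ s ih =>
    rw [iterate_succ_apply', ih, range_add_one, filter_insert]
    by_cases h : (v ^ s) a ∈ S <;>
      simp [tOf, h, pow_succ', Nat.odd_add_one, -Nat.not_odd_iff_even]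

end

theorem ncard_inter_orbit_eq_card_filter_range {α : Type*} [DecidableEq α] {f : α → α}
    {x : α} (hx : x ∈ periodicPts f) (S : Finset α) :
    Set.ncard {y | y ∈ S ∧ ∃ s, f^[s] x = y} =
      #{i ∈ range (minimalPeriod f x) | f^[i] x ∈ S} := by
  have horbit : {y | y ∈ S ∧ ∃ s, f^[s] x = y} =
      ↑(image (f^[·] x) {i ∈ range (minimalPeriod f x) | f^[i] x ∈ S}) := by
    ext y
    simp only [Set.mem_ofPred_eq, coe_image, coe_filter, Set.mem_image, mem_range]
    constructor
    · rintro ⟨hy, s, rfl⟩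
      exact ⟨s % minimalPeriod f x, ⟨Nat.mod_lt _ (minimalPeriod_pos_of_mem_periodicPts hx),
        by rwa [iterate_mod_minimalPeriod_eq]⟩, iterate_mod_minimalPeriod_eq⟩
    · rintro ⟨i, ⟨-, hi⟩, rfl⟩
      exact ⟨hi, i, rfl⟩
  rw [horbit, Set.ncard_coe_finset, card_image_of_injOn]
  exact iterate_injOn_Iio_minimalPeriod.mono fun i hi => by simp_all

/-- if `v` is a bijection of `{1,...,n}` and `S` meets every `v`-orbit in an
odd number of elements, then the induced `t` is a straight chart: it is a bijection,
`t(-k) = -t(k)`, and a power of `t` carries every `k` to `-k`. -/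
theorem stmt6 (n : ℕ) (hn : 1 ≤ n) (v : Equiv.Perm (ZMod n)) (S : Finset (ZMod n))
    (hodd : ∀ a : ZMod n, Odd (Set.ncard {x : ZMod n | x ∈ S ∧ ∃ s : ℕ, (v ^ s) a = x})) :
    Function.Bijective (tOf v S) ∧
      (∀ p : Xn n, tOf v S (negX p) = negX (tOf v S p)) ∧
      (∀ p : Xn n, ∃ s : ℕ, (tOf v S)^[s] p = negX p) := by
  have : NeZero n := ⟨by omega⟩
  refine ⟨tOf_bijective v S, tOf_negX v S, fun ⟨a, b⟩ => ⟨minimalPeriod v a, ?_⟩⟩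
  have ha : a ∈ periodicPts v := v.injective.mem_periodicPts a
  have hcount := ncard_inter_orbit_eq_card_filter_range ha S
  simp only [← Equiv.Perm.coe_pow] at hcount
  rw [tOf_iterate, ← hcount, decide_eq_true (hodd a), Equiv.Perm.coe_pow, iterate_minimalPeriod]
  simp [negX]
end

section
/- Let K = (k_1, k_2, ...) be a finite sequence of non-negative integers, not all zero, and set n = Σ_m m·k_m. The number of charts (n,t) such that t has exactly k_m orbits of cardinality 2m for every m ≥ 1 equals n! · ∏_{m≥1} (1/k_m!) · ((2m-1)!/m!)^{k_m}. -/
open Equiv (Perm)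
open Equiv.Perm Finset
open scoped Nat

theorem Finset.prod_univ_comp_eq_finprod {ι κ M : Type*} [Fintype ι] [DecidableEq κ]
    [CommMonoid M] (c : ι → κ) (h : κ → M) :
    ∏ i, h (c i) = ∏ᶠ m, h m ^ #{i | c i = m} := by
  rw [prod_comp, finprod_eq_prod_of_mulSupport_subset (s := univ.image c)]
  intro m hm
  by_contra hmc
  refine hm ?_
  have hempty : ({i | c i = m} : Finset ι) = ∅ :=
    filter_eq_empty_iff.mpr fun i _ hi => hmc (by rw [← hi]; exact mem_image_of_mem c (mem_univ i))
  simp only [hempty, card_empty, pow_zero]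

@[to_additive]
theorem Finset.prod_range_succ_eq_mul_prod_Ico {M : Type*} [CommMonoid M] (F : ℕ → M) {N : ℕ}
    (hN : 1 ≤ N) : ∏ m ∈ range (N + 1), F m = F 0 * F 1 * ∏ m ∈ Ico 2 (N + 1), F m := by
  rw [range_eq_Ico, ← prod_Ico_consecutive F (Nat.zero_le 2) (by omega : 2 ≤ N + 1)]
  simp [prod_range_succ]

theorem finprod_pow_eq_prod_range {M : Type*} [CommMonoid M] {N : ℕ} {k e : ℕ → ℕ} (h : ℕ → M)
    (h0 : h 0 = 1) (hk : ∀ m, N < m → k m = 0) (he : ∀ m, 1 ≤ m → e m = k m) :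
    ∏ᶠ m, h m ^ e m = ∏ m ∈ range (N + 1), h m ^ k m := by
  have hek : ∀ m, h m ^ e m = h m ^ k m := fun m => by
    rcases Nat.eq_zero_or_pos m with rfl | hm
    · rw [h0, one_pow, one_pow]
    · rw [he m hm]
  simp only [hek]
  refine finprod_eq_prod_of_mulSupport_subset _ fun m hm => mem_range.mpr ?_
  by_contra hmN
  exact hm (show h m ^ k m = 1 by rw [hk m (by omega), pow_zero])

theorem prod_factorial_pow_eq_mul {k : ℕ → ℕ} (hk0 : k 0 = 0) (s : Finset ℕ) :
    ∏ m ∈ s, (k m)! * m ! ^ k m = (∏ m ∈ s, (m - 1)! ^ k m) * ∏ m ∈ s, (k m)! * m ^ k m := by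
  rw [← prod_mul_distrib]
  refine prod_congr rfl fun m _ => ?_
  rcases Nat.eq_zero_or_pos m with rfl | hm
  · simp [hk0]
  · rw [← Nat.mul_factorial_pred hm.ne', mul_pow]
    ring

theorem Set.ncard_mul_eq_ncard_mul_of_rel {β γ : Type*} [Finite β] [Finite γ] (r : β → γ → Prop)
    {S : Set β} {C : Set γ} {u v : ℕ} (hr : ∀ a b, r a b → (a ∈ S ↔ b ∈ C))
    (hu : ∀ a ∈ S, Nat.card {b // r a b} = u) (hv : ∀ b ∈ C, Nat.card {a // r a b} = v) :
    S.ncard * u = C.ncard * v := by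
  classical
  have := Fintype.ofFinite β
  have := Fintype.ofFinite γ
  rw [Set.ncard_eq_toFinset_card', Set.ncard_eq_toFinset_card']
  refine card_mul_eq_card_mul r (fun a ha => ?_) fun b hb => ?_
  · rw [Set.mem_toFinset] at ha
    rw [← hu a ha, Nat.card_eq_fintype_card, Fintype.card_subtype, bipartiteAbove]
    congr 1
    ext b
    simpa using fun h => (hr a b h).mp ha
  · rw [Set.mem_toFinset] at hb
    rw [← hv b hb, Nat.card_eq_fintype_card, Fintype.card_subtype, bipartiteBelow]
    congr 1
    ext a
    simpa using fun h => (hr a b h).mpr hb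

theorem card_subtype_fst_bool {β : Type*} [Finite β] (p : β → Prop) :
    Nat.card {x : β × Bool // p x.1} = 2 * Nat.card {b // p b} := by
  rw [Nat.card_congr Equiv.prodSubtypeFstEquivSubtypeProd, Nat.card_prod,
    Nat.card_eq_fintype_card (α := Bool), Fintype.card_bool, mul_comm]

namespace Equiv.Perm

section FullCycles

theorem apply_eq_of_sameCycle {α ι : Type*} [Finite α] {f : α → ι} {σ : Perm α} (hσ : f ∘ σ = f)
    {x y : α} (h : σ.SameCycle x y) : f x = f y := by
  obtain ⟨i, rfl⟩ := h.exists_nat_pow_eq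
  clear h
  induction i with
  | zero => rfl
  | succ i ih => rw [ih, pow_succ', mul_apply]; exact (congrFun hσ _).symm

variable {α : Type*} [Fintype α] [DecidableEq α]

theorem forall_sameCycle_iff_cycleType_eq (hα : 2 ≤ Fintype.card α) (σ : Perm α) :
    (∀ x y, σ.SameCycle x y) ↔ σ.cycleType = {Fintype.card α} := by
  constructor
  · intro hσ
    have hmove : ∀ x, σ x ≠ x := fun x hx => by
      obtain ⟨y, hy⟩ := Fintype.exists_ne_of_one_lt_card hα x
      exact hy ((hσ x y).eq_of_left hx).symm
    have hsupp : σ.support = univ := eq_univ_of_forall fun x => mem_support.mpr (hmove x)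
    obtain ⟨x⟩ : Nonempty α := Fintype.card_pos_iff.mp (by omega)
    rw [IsCycle.cycleType ⟨x, hmove x, fun y _ => hσ x y⟩, hsupp, card_univ]
  · intro hσ x y
    have hcyc : σ.IsCycle := card_cycleType_eq_one.mp (by rw [hσ, Multiset.card_singleton])
    have hsupp : σ.support = univ := by
      apply eq_univ_of_card
      rw [← sum_cycleType, hσ, Multiset.sum_singleton]
    exact hcyc.sameCycle (mem_support.mp (hsupp ▸ mem_univ x)) (mem_support.mp (hsupp ▸ mem_univ y))

theorem card_of_forall_sameCycle :
    Nat.card {σ : Perm α // ∀ x y, σ.SameCycle x y} = (Nat.card α - 1)! := by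
  rw [Nat.card_eq_fintype_card (α := α)]
  rcases le_or_gt (Fintype.card α) 1 with hα | hα
  · have : Subsingleton α := Fintype.card_le_one_iff_subsingleton.mp hα
    have hall : ∀ σ : Perm α, ∀ x y, σ.SameCycle x y := fun σ x y =>
      Subsingleton.elim x y ▸ SameCycle.refl σ x
    rw [Nat.card_congr (Equiv.subtypeUnivEquiv hall), Nat.card_perm, Nat.card_eq_fintype_card,
      Nat.sub_eq_zero_of_le hα, Nat.factorial_zero, Nat.factorial_eq_one.mpr hα]
  rw [Nat.card_congr (Equiv.subtypeEquivRight (forall_sameCycle_iff_cycleType_eq hα)),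
    Nat.card_eq_fintype_card, Fintype.card_subtype, card_of_cycleType_singleton hα le_rfl,
    Nat.choose_self, mul_one]

theorem card_sameCycle_iff_apply_eq {ι : Type*} [Fintype ι] (f : α → ι) :
    Nat.card {σ : Perm α // ∀ x y, σ.SameCycle x y ↔ f x = f y} =
      ∏ i, (Nat.card {a // f a = i} - 1)! := by
  classical
  let E : {σ : Perm α // f ∘ σ = f} ≃ ∀ i, Perm {a // f a = i} :=
    ((Equiv.subtypeEquiv DomMulAct.mk fun _ => Iff.rfl).trans MulOpposite.opEquiv).trans
      (DomMulAct.stabilizerMulEquiv f).toEquiv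
  have hcomp : ∀ σ : Perm α, (∀ x y, σ.SameCycle x y ↔ f x = f y) → f ∘ σ = f := fun σ hσ =>
    funext fun x => ((hσ x (σ x)).mp (SameCycle.refl σ x).apply_right).symm
  have hpres : ∀ (σ : {σ : Perm α // f ∘ σ = f}) i a, f (σ.1 a) = i ↔ f a = i := fun σ i a => by
    rw [← Function.comp_apply (f := f), σ.2]
  have hfib : ∀ σ : {σ : Perm α // f ∘ σ = f},
      (∀ x y, σ.1.SameCycle x y ↔ f x = f y) ↔ ∀ i, ∀ x y, (E σ i).SameCycle x y := by
    intro σ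
    refine ⟨fun h i x y => ?_, fun h x y => ⟨apply_eq_of_sameCycle σ.2, fun hxy => ?_⟩⟩
    · exact (sameCycle_subtypePerm (f := σ.1) (h := hpres σ i)).mpr
        ((h x y).mpr (x.2.trans y.2.symm))
    · exact (sameCycle_subtypePerm (f := σ.1) (h := hpres σ (f x))).mp
        (h (f x) ⟨x, rfl⟩ ⟨y, hxy.symm⟩)
  calc Nat.card {σ : Perm α // ∀ x y, σ.SameCycle x y ↔ f x = f y}
      = Nat.card {σ : {σ : Perm α // f ∘ σ = f} // ∀ x y, σ.1.SameCycle x y ↔ f x = f y} :=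
        Nat.card_congr (Equiv.subtypeSubtypeEquivSubtype fun {σ} => hcomp σ).symm
    _ = Nat.card {τ : ∀ i, Perm {a // f a = i} // ∀ i, ∀ x y, (τ i).SameCycle x y} :=
        Nat.card_congr (E.subtypeEquiv hfib)
    _ = ∏ i, (Nat.card {a // f a = i} - 1)! := by
        rw [Nat.card_congr (Equiv.subtypePiEquivPi (β := fun i => Perm {a // f a = i})
          (p := fun _ τ => ∀ x y, τ.SameCycle x y)), Nat.card_pi]
        exact prod_congr rfl fun i _ => card_of_forall_sameCycle

end FullCycles

section Orbits

variable {α : Type*}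

def orbitOf (σ : Perm α) (a : α) : Set α := {x | σ.SameCycle a x}

noncomputable def orbitCount (σ : Perm α) (m : ℕ) : ℕ :=
  {O : Set α | (∃ a, O = σ.orbitOf a) ∧ O.ncard = m}.ncard

theorem orbitOf_eq_iff {σ : Perm α} {a b : α} : σ.orbitOf a = σ.orbitOf b ↔ σ.SameCycle a b := by
  refine ⟨fun h => ?_, fun h => Set.ext fun x => ⟨h.symm.trans, h.trans⟩⟩
  have hb : b ∈ σ.orbitOf b := SameCycle.refl σ b
  rwa [← h] at hb

theorem card_fiber_orbitOf (σ : Perm α) (b : α) :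
    Nat.card {a // σ.orbitOf a = σ.orbitOf b} = (σ.orbitOf b).ncard := by
  rw [← Nat.card_coe_set_eq]
  exact Nat.card_congr (Equiv.subtypeEquivRight fun _ => orbitOf_eq_iff.trans sameCycle_comm)

theorem orbitCount_eq_card_filter [Fintype α] (σ : Perm α) {m : ℕ} (hm : m ≠ 0) :
    σ.orbitCount m = #{O : Set α | Nat.card {a // σ.orbitOf a = O} = m} := by
  rw [orbitCount, ← Set.ncard_coe_finset]
  congr 1
  ext O
  simp only [coe_filter, mem_univ, true_and, Set.mem_ofPred_eq]
  constructor
  · rintro ⟨⟨b, rfl⟩, hb⟩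
    rw [← hb, card_fiber_orbitOf]
  · intro h
    obtain ⟨⟨b, rfl⟩⟩ : Nonempty {a // σ.orbitOf a = O} :=
      (Nat.card_pos_iff.mp (Nat.pos_of_ne_zero (h ▸ hm))).1
    exact ⟨⟨b, rfl⟩, by rw [← h, card_fiber_orbitOf]⟩

variable [Fintype α] [DecidableEq α]

theorem coe_support_cycleOf {σ : Perm α} {a : α} (ha : a ∈ σ.support) :
    ((σ.cycleOf a).support : Set α) = σ.orbitOf a :=
  Set.ext fun _ => mem_support_cycleOf_iff.trans (and_iff_left ha)

theorem count_cycleType_eq_orbitCount (σ : Perm α) {m : ℕ} (hm : 2 ≤ m) :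
    σ.cycleType.count m = σ.orbitCount m := by
  have hcount : σ.cycleType.count m = #{c ∈ σ.cycleFactorsFinset | m = #c.support} := by
    rw [cycleType_def, Multiset.count_map]; rfl
  have himage : {O : Set α | (∃ a, O = σ.orbitOf a) ∧ O.ncard = m} =
      (fun c : Perm α => (c.support : Set α)) '' ↑{c ∈ σ.cycleFactorsFinset | m = #c.support} := by
    ext O
    simp only [Set.mem_ofPred_eq, Set.mem_image, coe_filter]
    constructor
    · rintro ⟨⟨a, rfl⟩, hO⟩
      have ha : a ∈ σ.support := by
        by_contra ha
        have hfix : σ.orbitOf a = {a} := Set.ext fun x =>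
          ⟨fun h => (h.eq_of_left (notMem_support.mp ha)).symm, fun h => h ▸ SameCycle.refl σ a⟩
        rw [hfix, Set.ncard_singleton] at hO
        omega
      refine ⟨σ.cycleOf a, ⟨cycleOf_mem_cycleFactorsFinset_iff.mpr ha, ?_⟩, coe_support_cycleOf ha⟩
      rw [← hO, ← coe_support_cycleOf ha, Set.ncard_coe_finset]
    · rintro ⟨c, ⟨hc, hcard⟩, rfl⟩
      obtain ⟨a, ha⟩ : c.support.Nonempty := card_pos.mp (by omega)
      have hσa : a ∈ σ.support := mem_cycleFactorsFinset_support_le hc ha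
      rw [cycle_is_cycleOf ha hc, coe_support_cycleOf hσa]
      refine ⟨⟨a, rfl⟩, ?_⟩
      rw [← coe_support_cycleOf hσa, ← cycle_is_cycleOf ha hc, Set.ncard_coe_finset, hcard]
  rw [hcount, orbitCount, himage, Set.InjOn.ncard_image, Set.ncard_coe_finset]
  rintro c hc c' hc' (hsupp : (c.support : Set α) = c'.support)
  simp only [coe_filter, Set.mem_ofPred_eq] at hc hc'
  obtain ⟨a, ha⟩ : c.support.Nonempty := card_pos.mp (by omega)
  rw [cycle_is_cycleOf ha hc.1, cycle_is_cycleOf (coe_inj.mp hsupp ▸ ha) hc'.1]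

theorem orbitCount_one (σ : Perm α) : σ.orbitCount 1 = Fintype.card α - σ.cycleType.sum := by
  have himage : {O : Set α | (∃ a, O = σ.orbitOf a) ∧ O.ncard = 1} =
      (fun a => {a}) '' Function.fixedPoints σ := by
    ext O
    constructor
    · rintro ⟨⟨a, rfl⟩, hO⟩
      obtain ⟨b, hb⟩ := Set.ncard_eq_one.mp hO
      have ha : a ∈ σ.orbitOf a := SameCycle.refl σ a
      have hσa : σ a ∈ σ.orbitOf a := (SameCycle.refl σ a).apply_right
      rw [hb] at ha hσa
      subst ha
      exact ⟨a, hσa, hb.symm⟩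
    · rintro ⟨a, ha, rfl⟩
      refine ⟨⟨a, Set.ext fun x => ⟨fun h => h ▸ SameCycle.refl σ a,
        fun h => (h.eq_of_left ha).symm⟩⟩, Set.ncard_singleton a⟩
  rw [orbitCount, himage, Set.ncard_image_of_injective _ Set.singleton_injective,
    ← card_fixedPoints, Set.ncard_eq_toFinset_card', Set.toFinset_card]

end Orbits

section OrbitLift

variable {α : Type*}

def IsOrbitLift (t : Perm (α × Bool)) (g : Perm α) : Prop :=
  ∀ x y, t.SameCycle x y ↔ g.SameCycle x.1 y.1

theorem IsOrbitLift.orbitCount_two_mul [Finite α] {t : Perm (α × Bool)} {g : Perm α}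
    (h : IsOrbitLift t g) (m : ℕ) : t.orbitCount (2 * m) = g.orbitCount m := by
  have horb : ∀ x, t.orbitOf x = Prod.fst ⁻¹' g.orbitOf x.1 := fun x => Set.ext (h x)
  have hcard : ∀ O : Set α, (Prod.fst ⁻¹' O : Set (α × Bool)).ncard = 2 * O.ncard := fun O => by
    rw [← Nat.card_coe_set_eq, ← Nat.card_coe_set_eq]
    exact card_subtype_fst_bool (· ∈ O)
  have himage : {O | (∃ x, O = t.orbitOf x) ∧ O.ncard = 2 * m} =
      Set.preimage Prod.fst '' {O | (∃ a, O = g.orbitOf a) ∧ O.ncard = m} := by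
    ext O'
    constructor
    · rintro ⟨⟨x, rfl⟩, hO⟩
      rw [horb, hcard] at hO
      exact ⟨g.orbitOf x.1, ⟨⟨x.1, rfl⟩, by omega⟩, (horb x).symm⟩
    · rintro ⟨O, ⟨⟨a, rfl⟩, hO⟩, rfl⟩
      exact ⟨⟨(a, true), (horb (a, true)).symm⟩, by rw [hcard, hO]⟩
  rw [orbitCount, himage,
    Set.ncard_image_of_injective _ (Set.preimage_injective.mpr Prod.fst_surjective), orbitCount]

variable [Fintype α] [DecidableEq α]

theorem card_isOrbitLift_left (g : Perm α) :
    Nat.card {t : Perm (α × Bool) // IsOrbitLift t g} = ∏ᶠ m, (2 * m - 1)! ^ g.orbitCount m := by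
  classical
  have hiff : ∀ t : Perm (α × Bool),
      IsOrbitLift t g ↔ ∀ x y, t.SameCycle x y ↔ g.orbitOf x.1 = g.orbitOf y.1 :=
    fun t => forall₂_congr fun x y => by rw [orbitOf_eq_iff]
  have hfib : ∀ O, Nat.card {x : α × Bool // g.orbitOf x.1 = O} =
      2 * Nat.card {a // g.orbitOf a = O} := fun O => card_subtype_fst_bool (g.orbitOf · = O)
  rw [Nat.card_congr (Equiv.subtypeEquivRight hiff), card_sameCycle_iff_apply_eq]
  simp only [hfib]
  rw [prod_univ_comp_eq_finprod (fun O => Nat.card {a // g.orbitOf a = O}) fun m => (2 * m - 1)!]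
  refine finprod_congr fun m => ?_
  rcases eq_or_ne m 0 with rfl | hm
  · simp
  · rw [orbitCount_eq_card_filter g hm]

theorem card_isOrbitLift_right {t : Perm (α × Bool)} (ht : ∀ x, t.SameCycle x (x.1, !x.2)) :
    Nat.card {g : Perm α // IsOrbitLift t g} = ∏ᶠ m, (m - 1)! ^ t.orbitCount (2 * m) := by
  classical
  have hpair : ∀ x, t.orbitOf x = t.orbitOf (x.1, true) := by
    rintro ⟨a, (_ | _)⟩
    · exact orbitOf_eq_iff.mpr (ht _)
    · rfl
  have hiff : ∀ g : Perm α,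
      IsOrbitLift t g ↔ ∀ a b, g.SameCycle a b ↔ t.orbitOf (a, true) = t.orbitOf (b, true) := by
    refine fun g => ⟨fun h a b => (h (a, true) (b, true)).symm.trans orbitOf_eq_iff.symm,
      fun h x y => ?_⟩
    rw [← orbitOf_eq_iff, hpair x, hpair y, h]
  rw [Nat.card_congr (Equiv.subtypeEquivRight hiff), card_sameCycle_iff_apply_eq,
    prod_univ_comp_eq_finprod (fun O => Nat.card {a // t.orbitOf (a, true) = O})
      fun m => (m - 1)!]
  refine finprod_congr fun m => ?_
  rcases eq_or_ne m 0 with rfl | hm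
  · simp
  rw [orbitCount_eq_card_filter t (by omega)]
  congr 2
  refine filter_congr fun O _ => ?_
  have hfib : Nat.card {x : α × Bool // t.orbitOf x = O} =
      2 * Nat.card {a // t.orbitOf (a, true) = O} := by
    rw [← card_subtype_fst_bool]
    exact Nat.card_congr (Equiv.subtypeEquivRight fun x => by rw [hpair x])
  rw [hfib]
  omega

end OrbitLift

end Equiv.Perm

section CycleTypeOfCounts

variable (N : ℕ) (k : ℕ → ℕ)

-- Fixed points (`m = 1`) are not recorded in `Equiv.Perm.cycleType`.
def cycleTypeOfCounts : Multiset ℕ := ∑ m ∈ Ico 2 (N + 1), Multiset.replicate (k m) m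

variable {N k}

theorem count_cycleTypeOfCounts (hk : ∀ m, N < m → k m = 0) {a : ℕ} (ha : 2 ≤ a) :
    (cycleTypeOfCounts N k).count a = k a := by
  simp only [cycleTypeOfCounts, Multiset.count_sum', Multiset.count_replicate, sum_ite_eq', mem_Ico]
  split_ifs with h
  · rfl
  · exact (hk a (by omega)).symm

theorem two_le_of_mem_cycleTypeOfCounts {a : ℕ} (h : a ∈ cycleTypeOfCounts N k) : 2 ≤ a := by
  obtain ⟨m, hm, ha⟩ := Multiset.mem_sum.mp h
  rw [Multiset.eq_of_mem_replicate ha]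
  exact (mem_Ico.mp hm).1

theorem sum_cycleTypeOfCounts : (cycleTypeOfCounts N k).sum = ∑ m ∈ Ico 2 (N + 1), m * k m := by
  simp [cycleTypeOfCounts, Multiset.sum_sum, mul_comm]

theorem prod_cycleTypeOfCounts : (cycleTypeOfCounts N k).prod = ∏ m ∈ Ico 2 (N + 1), m ^ k m := by
  simp [cycleTypeOfCounts, Multiset.prod_sum]

theorem prod_factorial_count_cycleTypeOfCounts (hk : ∀ m, N < m → k m = 0) :
    ∏ a ∈ (cycleTypeOfCounts N k).toFinset, ((cycleTypeOfCounts N k).count a)! =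
      ∏ m ∈ Ico 2 (N + 1), (k m)! := by
  rw [prod_subset (s₂ := Ico 2 (N + 1))]
  · exact prod_congr rfl fun m hm => by rw [count_cycleTypeOfCounts hk (mem_Ico.mp hm).1]
  · intro a ha
    obtain ⟨m, hm, ha⟩ := Multiset.mem_sum.mp (Multiset.mem_toFinset.mp ha)
    rwa [Multiset.eq_of_mem_replicate ha]
  · intro a _ hnot
    rw [Multiset.count_eq_zero.mpr fun h => hnot (Multiset.mem_toFinset.mpr h), Nat.factorial_zero]

variable {α : Type*} [Fintype α] [DecidableEq α]

omit [DecidableEq α] in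
theorem card_sub_sum_cycleTypeOfCounts (hN : 1 ≤ N)
    (hα : Fintype.card α = ∑ m ∈ range (N + 1), m * k m) :
    Fintype.card α - (cycleTypeOfCounts N k).sum = k 1 := by
  rw [hα, sum_range_succ_eq_add_sum_Ico _ hN, sum_cycleTypeOfCounts]
  omega

theorem cycleType_eq_cycleTypeOfCounts_iff (hN : 1 ≤ N) (hk : ∀ m, N < m → k m = 0)
    (hα : Fintype.card α = ∑ m ∈ range (N + 1), m * k m) (g : Perm α) :
    g.cycleType = cycleTypeOfCounts N k ↔ ∀ m, 1 ≤ m → g.orbitCount m = k m := by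
  constructor
  · intro hg m hm
    rcases eq_or_lt_of_le hm with rfl | hm2
    · rw [orbitCount_one, hg, card_sub_sum_cycleTypeOfCounts hN hα]
    · rw [← count_cycleType_eq_orbitCount g hm2, hg, count_cycleTypeOfCounts hk hm2]
  · intro hg
    ext a
    by_cases ha : 2 ≤ a
    · rw [count_cycleType_eq_orbitCount g ha, hg a (by omega), count_cycleTypeOfCounts hk ha]
    · rw [Multiset.count_eq_zero.mpr fun h => ha (two_le_of_mem_cycleType h),
        Multiset.count_eq_zero.mpr fun h => ha (two_le_of_mem_cycleTypeOfCounts h)]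

theorem ncard_orbitCount_eq_mul_prod (hN : 1 ≤ N) (hk0 : k 0 = 0) (hk : ∀ m, N < m → k m = 0)
    (hα : Fintype.card α = ∑ m ∈ range (N + 1), m * k m) :
    {g : Perm α | ∀ m, 1 ≤ m → g.orbitCount m = k m}.ncard *
      ∏ m ∈ range (N + 1), (k m)! * m ^ k m = (Fintype.card α)! := by
  have hsum : (cycleTypeOfCounts N k).sum ≤ Fintype.card α := by
    rw [hα, sum_range_succ_eq_add_sum_Ico _ hN, sum_cycleTypeOfCounts]
    omega
  have h := card_of_cycleType_mul_eq α (cycleTypeOfCounts N k)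
  rw [if_pos ⟨hsum, fun a ha => two_le_of_mem_cycleTypeOfCounts ha⟩] at h
  rw [← Nat.card_coe_set_eq, Set.coe_ofPred, Nat.card_congr (Equiv.subtypeEquivRight fun g =>
      (cycleType_eq_cycleTypeOfCounts_iff hN hk hα g).symm), Nat.card_eq_fintype_card,
    Fintype.card_subtype, ← h, card_sub_sum_cycleTypeOfCounts hN hα, prod_cycleTypeOfCounts,
    prod_factorial_count_cycleTypeOfCounts hk, prod_range_succ_eq_mul_prod_Ico _ hN, hk0,
    prod_mul_distrib]
  simp only [Nat.factorial_zero, pow_zero, mul_one, one_mul]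
  ring

end CycleTypeOfCounts

/-- the number of charts `(n,t)` with exactly `k_m` orbits of cardinality
`2m` for every `m ≥ 1`, where `n = Σ_m m·k_m > 0`, equals
`n! ∏_m (1/k_m!)·((2m-1)!/m!)^{k_m}` (stated multiplicatively). -/
theorem stmt11 (N : ℕ) (k : ℕ → ℕ) (hk0 : k 0 = 0) (hk : ∀ m, N < m → k m = 0)
    (hne : ∃ m, k m ≠ 0) (n : ℕ) (hn : n = ∑ m ∈ Finset.range (N + 1), m * k m) :
    Set.ncard {t : Equiv.Perm (Xn n) | IsChart t ∧
        ∀ m : ℕ, 1 ≤ m →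
          Set.ncard {O : Set (Xn n) |
            (∃ a : Xn n, O = {x | ∃ s : ℤ, (t ^ s) a = x}) ∧ O.ncard = 2 * m} = k m} *
      ∏ m ∈ Finset.range (N + 1), Nat.factorial (k m) * (Nat.factorial m) ^ (k m) =
    Nat.factorial n *
      ∏ m ∈ Finset.range (N + 1), (Nat.factorial (2 * m - 1)) ^ (k m) := by
  obtain ⟨m₀, hm₀⟩ := hne
  have hm₀N : m₀ ≤ N := not_lt.mp fun h => hm₀ (hk m₀ h)
  have hm₀1 : 1 ≤ m₀ := Nat.pos_of_ne_zero fun h => hm₀ (h ▸ hk0)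
  have : NeZero n := ⟨by
    have h1 : m₀ * k m₀ ≤ n := hn ▸ single_le_sum (f := fun m => m * k m)
      (fun _ _ => Nat.zero_le _) (mem_range.mpr (by omega))
    have h2 : 0 < m₀ * k m₀ := Nat.mul_pos hm₀1 (Nat.pos_of_ne_zero hm₀)
    omega⟩
  have hC := ncard_orbitCount_eq_mul_prod (α := ZMod n) (hm₀1.trans hm₀N) hk0 hk
    (by rw [ZMod.card, hn])
  rw [ZMod.card] at hC
  rw [prod_factorial_pow_eq_mul hk0, ← mul_assoc,
    Set.ncard_mul_eq_ncard_mul_of_rel IsOrbitLift (C := {g : Perm (ZMod n) | _})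
      (v := ∏ m ∈ range (N + 1), (2 * m - 1)! ^ k m) ?_ ?_ ?_, mul_right_comm, hC]
  · intro t g h
    change (_ ∧ ∀ m, 1 ≤ m → t.orbitCount (2 * m) = k m) ↔ _
    simp only [h.orbitCount_two_mul]
    exact and_iff_right fun x => (h x (x.1, !x.2)).mpr (SameCycle.refl g x.1)
  · exact fun t ht => (card_isOrbitLift_right ht.1).trans (finprod_pow_eq_prod_range _ rfl hk ht.2)
  · exact fun g hg => (card_isOrbitLift_left g).trans (finprod_pow_eq_prod_range _ rfl hk hg)
end

section
/- Let W = (w : {1,...,n} → E, S) be a full word and, for m ≥ 1, let k_m be the number of letters e ∈ E with card(w^{-1}(e)) = m. Then the order of Aut(W) divides m·k_m for every m ≥ 1. -/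
/-!
Shifting by `a` identifies `Aut(W)` with a subgroup `H` of `ℤ/nℤ`. If `(ψ, a)` is an
automorphism, translation by `a` maps the positions carrying the letter `w k` onto those carrying
`w (k + a) = ψ (w k)`, so the set `T` of positions whose letter occurs exactly `m` times is a union
of cosets of `H`. Hence `|H|` divides `|T| = m · k_m`.
-/

open Equiv
open scoped Pointwise

theorem AddSubgroup.card_dvd_ncard_of_add_mem {A : Type*} [AddGroup A] (H : AddSubgroup A)
    {T : Set A} (hT : ∀ x ∈ T, ∀ h ∈ H, x + h ∈ T) : Nat.card H ∣ T.ncard := by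
  have hunion : QuotientAddGroup.mk ⁻¹' (QuotientAddGroup.mk '' T : Set (A ⧸ H)) = T := by
    refine (Set.subset_preimage_image _ _).antisymm' ?_
    rintro x ⟨y, hy, hyx⟩
    simpa using hT y hy _ (QuotientAddGroup.eq.mp hyx)
  rw [← hunion, ← Nat.card_coe_set_eq,
    Nat.card_congr (QuotientAddGroup.preimageMkEquivAddSubgroupProdSet H _), Nat.card_prod]
  exact dvd_mul_right _ _

theorem Set.ncard_preimage_of_ncard_fiber_eq {α E : Type*} [Finite α] {w : α → E} {M : Set E}
    {m : ℕ} (h : ∀ e ∈ M, (w ⁻¹' {e}).ncard = m) : (w ⁻¹' M).ncard = m * M.ncard := by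
  rcases Nat.eq_zero_or_pos m with rfl | hm
  · suffices w ⁻¹' M = ∅ by simp [this]
    refine Set.eq_empty_of_forall_notMem fun x hx => ?_
    have hfiber := h (w x) hx
    rw [Set.ncard_eq_zero] at hfiber
    exact hfiber.subset rfl
  · have hM : M ⊆ Set.range w := fun e he => by
      obtain ⟨x, hx⟩ := Set.nonempty_of_ncard_ne_zero (h e he ▸ hm.ne')
      exact ⟨x, hx⟩
    obtain ⟨s, rfl⟩ := ((Set.finite_range w).subset hM).exists_finset_coe
    rw [← Set.biUnion_preimage_singleton, Set.Finite.ncard_biUnion s.finite_toSet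
      (fun _ _ => Set.toFinite _) (Set.pairwiseDisjoint_fiber w _), finsum_mem_coe_finset,
      Finset.sum_const_nat h, Set.ncard_coe_finset, mul_comm]

theorem ncard_fiber_apply_eq_of_semiconj {X E : Type*} {w : X → E} {σ : Perm X} {ψ : Perm E}
    (h : ∀ k, ψ (w k) = w (σ k)) (k : X) :
    (w ⁻¹' {w (σ k)}).ncard = (w ⁻¹' {w k}).ncard := by
  have hfiber : w ⁻¹' {w (σ k)} = σ.symm ⁻¹' (w ⁻¹' {w k}) := by
    ext j
    simp only [Set.mem_preimage, Set.mem_singleton_iff]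
    rw [← ψ.apply_eq_iff_eq (x := w (σ.symm j)), h, h, σ.apply_symm_apply]
  rw [hfiber, Set.ncard_preimage_of_injective_subset_range σ.symm.injective (by simp)]

open Fin.NatCast in
theorem finRotate_pow_apply {n : ℕ} [NeZero n] (j : ℕ) (k : Fin n) :
    (finRotate n ^ j) k = k + j := by
  induction j with
  | zero => simp
  | succ j ih => rw [pow_succ', Perm.mul_apply, ih, finRotate_apply, Nat.cast_succ, add_assoc]

theorem coe_finRotate_pow_val {n : ℕ} [NeZero n] (a : Fin n) :
    ⇑(finRotate n ^ (a : ℕ)) = (· + a) := by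
  funext k
  rw [finRotate_pow_apply, Fin.cast_val_eq_self]

section Shifts

variable {X E : Type*} [AddGroup X]

def relabelingShifts (w : X → E) : AddSubgroup X where
  carrier := {a | ∃ ψ : Perm E, ∀ k, ψ (w k) = w (k + a)}
  zero_mem' := ⟨1, by simp⟩
  add_mem' := by
    rintro a b ⟨ψ, hψ⟩ ⟨φ, hφ⟩
    exact ⟨φ * ψ, fun k => by rw [Perm.mul_apply, hψ, hφ, add_assoc]⟩
  neg_mem' := by
    rintro a ⟨ψ, hψ⟩
    exact ⟨ψ⁻¹, fun k => by rw [Perm.inv_eq_iff_eq, hψ, neg_add_cancel_right]⟩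

@[simp]
theorem mem_relabelingShifts {w : X → E} {a : X} :
    a ∈ relabelingShifts w ↔ ∃ ψ : Perm E, ∀ k, ψ (w k) = w (k + a) :=
  Iff.rfl

theorem card_dvd_ncard_multiplicity_eq [Finite X] (w : X → E) {H : AddSubgroup X}
    (hH : H ≤ relabelingShifts w) (m : ℕ) :
    Nat.card H ∣ (w ⁻¹' {e | (w ⁻¹' {e}).ncard = m}).ncard := by
  refine H.card_dvd_ncard_of_add_mem fun x hx a ha => ?_
  obtain ⟨ψ, hψ⟩ := hH ha
  exact (ncard_fiber_apply_eq_of_semiconj (σ := Equiv.addRight a) hψ x).trans hx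

theorem setOf_finRotate_aut_eq {N : ℕ} (w : Fin (N + 1) → E) (S : Finset (Fin (N + 1))) :
    {a : Fin (N + 1) | ∃ ψ : Perm E,
        (∀ k, ψ (w k) = w ((finRotate (N + 1) ^ (a : ℕ)) k)) ∧
          S.image (finRotate (N + 1) ^ (a : ℕ)) = S} =
      (relabelingShifts w ⊓ AddAction.stabilizer (Fin (N + 1)) S : AddSubgroup _) := by
  ext a
  simp only [coe_finRotate_pow_val, Set.mem_ofPred_eq, SetLike.mem_coe, AddSubgroup.mem_inf,
    mem_relabelingShifts, AddAction.mem_stabilizer_iff, Finset.vadd_finset_def, vadd_eq_add,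
    add_comm a, exists_and_right]

end Shifts

theorem stmt15_general (n : ℕ) (E : Type*) (w : Fin n → E) (S : Finset (Fin n)) (m : ℕ) :
    Set.ncard {c : ZMod n | ∃ ψ : Equiv.Perm E,
        (∀ k, ψ (w k) = w ((finRotate n ^ c.val) k)) ∧
          S.image (finRotate n ^ c.val) = S} ∣
      m * Set.ncard {e : E | Set.ncard {k : Fin n | w k = e} = m} := by
  rw [← Set.ncard_preimage_of_ncard_fiber_eq (M := {e | {k | w k = e}.ncard = m}) fun e he => he]
  rcases n with _ | N
  · simp [Set.eq_empty_of_isEmpty]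
  · have hdvd := card_dvd_ncard_multiplicity_eq w
      (H := relabelingShifts w ⊓ AddAction.stabilizer _ S) inf_le_left m
    -- `ZMod (N + 1)` is `Fin (N + 1)` by definition, so the rewritten `hdvd` is the goal.
    rwa [← SetLike.coe_sort_coe, Nat.card_coe_set_eq, ← setOf_finRotate_aut_eq] at hdvd

/-- for a full word `W = (w : {1,...,n} → E, S)`, the order of `Aut(W)`
(which embeds into `ℤ/nℤ` via `(ψ,m) ↦ m`, so its order is the number of admissible
shifts `m`) divides `m·k_m`, where `k_m` is the number of letters occurring exactly
`m` times in `w`. -/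
theorem stmt15 (n : ℕ) (hn : 1 ≤ n) (E : Type*) (w : Fin n → E)
    (hw : Function.Surjective w) (S : Finset (Fin n)) (m : ℕ) (hm : 1 ≤ m) :
    Set.ncard {c : ZMod n | ∃ ψ : Equiv.Perm E,
        (∀ k, ψ (w k) = w ((finRotate n ^ c.val) k)) ∧
          S.image (finRotate n ^ c.val) = S} ∣
      m * Set.ncard {e : E | Set.ncard {k : Fin n | w k = e} = m} :=
  stmt15_general n E w S m
end

section
/- Let W = (w : {1,...,n} → E, S) be an odd full word. Define v : {1,...,n} → {1,...,n} by: v(k) is the minimal element of {k+1,...,n} that is w-equivalent to k, or, if none exists, the minimal element of {1,...,k} w-equivalent to k. Then v is a bijection whose orbits are exactly the w-equivalence classes, and (n, v, S) is a coherent semichart; moreover it is the unique coherent semichart whose associated word equals W. -/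
/-!
The hypotheses on `v` say that `v k` is the successor of `k` in its `w`-class, the class being
ordered cyclically. Such a map is injective, and its iterates climb through a class up to the
class maximum, which is sent to the class minimum; hence the orbits are the classes.
Conversely, a coherent class-preserving injection `v'` is this cyclic successor: if `v' k`
jumped over a class element, then by downward induction the last class element `q` before
`v' k` would also be sent to `v' k`.
-/

structure IsCyclicSucc {α E : Type*} [LinearOrder α] (w : α → E) (v : α → α) : Prop where
  map_fiber : ∀ k, w (v k) = w k
  lt_apply_le : ∀ k l, k < l → w l = w k → k < v k ∧ v k ≤ l
  apply_le_of_isMax : ∀ k, (∀ l, w l = w k → l ≤ k) → ∀ l, w l = w k → v k ≤ l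

namespace IsCyclicSucc

variable {α E : Type*} [LinearOrder α] {w : α → E} {v v' : α → α}

theorem coherent (hv : IsCyclicSucc w v) (k : α) :
    k < v k ∨ ((∀ l, w l = w k → l ≤ k) ∧ (∀ l, w l = w k → v k ≤ l)) := by
  by_cases h : ∀ l, w l = w k → l ≤ k
  · exact Or.inr ⟨h, hv.apply_le_of_isMax k h⟩
  · push Not at h
    obtain ⟨l, hl, hkl⟩ := h
    exact Or.inl (hv.lt_apply_le k l hkl hl).1

theorem eq (hv : IsCyclicSucc w v) (hv' : IsCyclicSucc w v') : v = v' := by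
  funext k
  by_cases h : ∀ l, w l = w k → l ≤ k
  · exact le_antisymm (hv.apply_le_of_isMax k h _ (hv'.map_fiber k))
      (hv'.apply_le_of_isMax k h _ (hv.map_fiber k))
  · push Not at h
    obtain ⟨l, hl, hkl⟩ := h
    exact le_antisymm
      (hv.lt_apply_le k (v' k) (hv'.lt_apply_le k l hkl hl).1 (hv'.map_fiber k)).2
      (hv'.lt_apply_le k (v k) (hv.lt_apply_le k l hkl hl).1 (hv.map_fiber k)).2

theorem apply_ne_of_lt (hv : IsCyclicSucc w v) {a b : α} (hab : a < b) (hw : w b = w a) :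
    v a ≠ v b := by
  obtain ⟨ha, hvab⟩ := hv.lt_apply_le a b hab hw
  by_cases hb : ∀ l, w l = w b → l ≤ b
  · have hvba : v b ≤ a := hv.apply_le_of_isMax b hb a hw.symm
    exact (hvba.trans_lt ha).ne'
  · push Not at hb
    obtain ⟨l, hl, hbl⟩ := hb
    exact (hvab.trans_lt (hv.lt_apply_le b l hbl hl).1).ne

theorem injective (hv : IsCyclicSucc w v) : Function.Injective v := by
  intro a b hab
  have hw : w b = w a := by rw [← hv.map_fiber a, ← hv.map_fiber b, hab]
  rcases lt_trichotomy a b with h | h | h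
  · exact absurd hab (hv.apply_ne_of_lt h hw)
  · exact h
  · exact absurd hab.symm (hv.apply_ne_of_lt h hw.symm)

theorem map_iterate (hv : IsCyclicSucc w v) (s : ℕ) (k : α) : w (v^[s] k) = w k := by
  induction s generalizing k with
  | zero => rfl
  | succ s ih => rw [Function.iterate_succ_apply, ih, hv.map_fiber]

section Finite

variable [Finite α]

theorem of_injective (hinj : Function.Injective v) (hw : ∀ k, w (v k) = w k)
    (hcoh : ∀ k, k < v k ∨ ((∀ l, w l = w k → l ≤ k) ∧ (∀ l, w l = w k → v k ≤ l))) :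
    IsCyclicSucc w v := by
  have hlt : ∀ k l, k < l → w l = w k → k < v k := fun k l hkl hl =>
    (hcoh k).resolve_right fun h => (h.1 l hl).not_gt hkl
  have hle : ∀ k l, k < l → w l = w k → v k ≤ l := by
    intro k
    induction k using WellFoundedGT.induction with
    | _ k ih =>
      intro l hkl hl
      by_contra! hlv
      obtain ⟨q, ⟨hqw, hqv⟩, hqmax⟩ := Set.exists_max_image {q | w q = w k ∧ q < v k} id
        (Set.toFinite _) ⟨l, hl, hlv⟩
      have hlq : l ≤ q := hqmax l ⟨hl, hlv⟩
      have hvq : v q ≤ v k := ih q (hkl.trans_le hlq) (v k) hqv (by rw [hw, hqw])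
      have hvq' : v k ≤ v q := not_lt.1 fun h =>
        (hlt q (v k) hqv (by rw [hw, hqw])).not_ge (hqmax (v q) ⟨by rw [hw, hqw], h⟩)
      exact (hkl.trans_le hlq).ne (hinj (le_antisymm hvq' hvq))
  exact ⟨hw, fun k l hkl hl => ⟨hlt k l hkl hl, hle k l hkl hl⟩,
    fun k h => ((hcoh k).resolve_left fun hk => (h _ (hw k)).not_gt hk).2⟩

theorem exists_iterate_eq_of_le (hv : IsCyclicSucc w v) {k l : α} (hkl : k ≤ l)
    (hl : w l = w k) : ∃ s, v^[s] k = l := by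
  induction l using WellFoundedLT.induction with
  | _ l ih =>
    rcases hkl.eq_or_lt with rfl | hkl
    · exact ⟨0, rfl⟩
    obtain ⟨p, ⟨hpw, hkp, hpl⟩, hpmax⟩ := Set.exists_max_image {p | w p = w k ∧ k ≤ p ∧ p < l}
      id (Set.toFinite _) ⟨k, rfl, le_rfl, hkl⟩
    obtain ⟨hp, hvpl⟩ := hv.lt_apply_le p l hpl (hl.trans hpw.symm)
    -- `p` is the last class element below `l`, so its successor must be `l`
    have hvp : v p = l := hvpl.antisymm <| not_lt.1 fun h =>
      hp.not_ge (hpmax (v p) ⟨(hv.map_fiber p).trans hpw, hkp.trans hp.le, h⟩)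
    obtain ⟨s, hs⟩ := ih p hpl hkp hpw
    exact ⟨s + 1, by rw [Function.iterate_succ_apply', hs, hvp]⟩

theorem exists_iterate_eq_iff (hv : IsCyclicSucc w v) {k l : α} :
    (∃ s, v^[s] k = l) ↔ w k = w l := by
  refine ⟨fun ⟨s, hs⟩ => hs ▸ (hv.map_iterate s k).symm, fun hkl => ?_⟩
  obtain ⟨M, hMw, hMmax⟩ : ∃ M, w M = w k ∧ ∀ m, w m = w k → m ≤ M :=
    Set.exists_max_image {m | w m = w k} id (Set.toFinite _) ⟨k, rfl⟩
  have hMmax' : ∀ m, w m = w M → m ≤ M := fun m hm => hMmax m (hm.trans hMw)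
  obtain ⟨s, hs⟩ := hv.exists_iterate_eq_of_le (hMmax k rfl) hMw
  obtain ⟨t, ht⟩ := hv.exists_iterate_eq_of_le
    (hv.apply_le_of_isMax M hMmax' l (hkl.symm.trans hMw.symm))
    (by rw [hv.map_fiber, hMw, hkl])
  exact ⟨t + 1 + s, by rw [Function.iterate_add_apply, Function.iterate_succ_apply, hs, ht]⟩

end Finite

end IsCyclicSucc

theorem stmt17_general (n : ℕ) (E : Type*) (w : Fin n → E)
    (S : Finset (Fin n))
    (hodd : ∀ e : E, Odd (Set.ncard {l : Fin n | l ∈ S ∧ w l = e}))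
    (v : Fin n → Fin n)
    (hv1 : ∀ k : Fin n, (∃ l, k < l ∧ w l = w k) →
        k < v k ∧ w (v k) = w k ∧ ∀ l, k < l → w l = w k → v k ≤ l)
    (hv2 : ∀ k : Fin n, (¬ ∃ l, k < l ∧ w l = w k) →
        w (v k) = w k ∧ ∀ l, w l = w k → v k ≤ l) :
    Function.Bijective v ∧
    (∀ k l : Fin n, (∃ s : ℕ, v^[s] k = l) ↔ w k = w l) ∧
    (∀ k : Fin n, Odd (Set.ncard {l : Fin n | l ∈ S ∧ w l = w k})) ∧
    (∀ k : Fin n, k < v k ∨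
        ((∀ l, w l = w k → l ≤ k) ∧ (∀ l, w l = w k → v k ≤ l))) ∧
    (∀ v' : Fin n → Fin n, Function.Bijective v' →
        (∀ k l : Fin n, (∃ s : ℕ, v'^[s] k = l) ↔ w k = w l) →
        (∀ k : Fin n, k < v' k ∨
          ((∀ l, w l = w k → l ≤ k) ∧ (∀ l, w l = w k → v' k ≤ l))) →
        v' = v) := by
  have hv : IsCyclicSucc w v :=
    { map_fiber := fun k => by
        by_cases h : ∃ l, k < l ∧ w l = w k
        exacts [(hv1 k h).2.1, (hv2 k h).1]
      lt_apply_le := fun k l hkl hl =>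
        ⟨(hv1 k ⟨l, hkl, hl⟩).1, (hv1 k ⟨l, hkl, hl⟩).2.2 l hkl hl⟩
      apply_le_of_isMax := fun k hk =>
        (hv2 k fun ⟨l, hkl, hl⟩ => (hk l hl).not_gt hkl).2 }
  refine ⟨Finite.injective_iff_bijective.1 hv.injective, fun k l => hv.exists_iterate_eq_iff,
    fun k => hodd (w k), hv.coherent, fun v' hbij' horb' hcoh' => ?_⟩
  have hw' : ∀ k, w (v' k) = w k := fun k => ((horb' k (v' k)).1 ⟨1, rfl⟩).symm
  exact (IsCyclicSucc.of_injective hbij'.1 hw' hcoh').eq hv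

/-- for an odd full word `W = (w : {1,...,n} → E, S)` (indices `Fin n` with
their order), the map `v` sending `k` to the least `l > k` that is `w`-equivalent to `k`
(or, if none, the least element of the `w`-class of `k`) is a bijection whose orbits are
the `w`-equivalence classes; `(n, v, S)` is a coherent semichart, and it is the unique
coherent semichart whose associated word is `W`. -/
theorem stmt17 (n : ℕ) (hn : 1 ≤ n) (E : Type*) (w : Fin n → E)
    (hw : Function.Surjective w) (S : Finset (Fin n))
    (hodd : ∀ e : E, Odd (Set.ncard {l : Fin n | l ∈ S ∧ w l = e}))
    (v : Fin n → Fin n)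
    (hv1 : ∀ k : Fin n, (∃ l, k < l ∧ w l = w k) →
        k < v k ∧ w (v k) = w k ∧ ∀ l, k < l → w l = w k → v k ≤ l)
    (hv2 : ∀ k : Fin n, (¬ ∃ l, k < l ∧ w l = w k) →
        w (v k) = w k ∧ ∀ l, w l = w k → v k ≤ l) :
    Function.Bijective v ∧
    (∀ k l : Fin n, (∃ s : ℕ, v^[s] k = l) ↔ w k = w l) ∧
    (∀ k : Fin n, Odd (Set.ncard {l : Fin n | l ∈ S ∧ w l = w k})) ∧
    (∀ k : Fin n, k < v k ∨
        ((∀ l, w l = w k → l ≤ k) ∧ (∀ l, w l = w k → v k ≤ l))) ∧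
    (∀ v' : Fin n → Fin n, Function.Bijective v' →
        (∀ k l : Fin n, (∃ s : ℕ, v'^[s] k = l) ↔ w k = w l) →
        (∀ k : Fin n, k < v' k ∨
          ((∀ l, w l = w k → l ≤ k) ∧ (∀ l, w l = w k → v' k ≤ l))) →
        v' = v) :=
  stmt17_general n E w S hodd v hv1 hv2
end

section
/- Let (n, v, S) be a coherent semichart and let W = (w, S) be its associated word. If m ∈ ℤ/nℤ is such that the m-th power of the circular permutation σ of {1,...,n} satisfies: σ^m maps w-equivalence classes to w-equivalence classes and σ^m(S) = S, then σ^m commutes with v. Consequently every automorphism of W arises from an automorphism of the semichart, i.e., Aut(v,S) = Aut(W). -/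
/-!
Coherence says that every cycle of `v`, read from its least element, increases up to its
greatest element and then returns to the least one. Hence, for `k` not fixed by `v`, the
image `v k` is the first element of the cycle of `k` met when walking upwards from `k`
cyclically: `v k - k` is the least of the differences `x - k` (in `ℤ/n`) over the other
elements `x` of that cycle. A power of the rotation preserves differences, and, having
finite order, maps the cycles of `v` onto cycles of `v` as soon as it maps them into
cycles; so it preserves this description of `v`, i.e. it commutes with `v`.
-/

namespace Semichart

open Equiv Perm

variable {α : Type*}

theorem exists_pow_apply_eq_iff_sameCycle [Finite α] {f : Perm α} {x y : α} :
    (∃ s : ℕ, (f ^ s) x = y) ↔ f.SameCycle x y :=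
  ⟨fun ⟨_, hs⟩ => hs ▸ (SameCycle.refl f x).pow_right, SameCycle.exists_nat_pow_eq⟩

def PreservesCycles (v σ : Perm α) : Prop :=
  ∀ x y, v.SameCycle x y → v.SameCycle (σ x) (σ y)

section PreservesCycles

variable {v σ : Perm α}

theorem preservesCycles_of_commute (h : Commute σ v) : PreservesCycles v σ :=
  fun x _ ⟨i, hi⟩ =>
    ⟨i, (DFunLike.congr_fun (h.zpow_right i).eq x).symm.trans (congrArg σ hi)⟩

theorem PreservesCycles.pow (h : PreservesCycles v σ) (j : ℕ) : PreservesCycles v (σ ^ j) := by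
  induction j with
  | zero => exact fun _ _ hxy => hxy
  | succ j ih =>
    exact fun x y hxy => by simpa only [pow_succ', Perm.mul_apply] using h _ _ (ih x y hxy)

theorem PreservesCycles.inv [Finite α] (h : PreservesCycles v σ) : PreservesCycles v σ⁻¹ := by
  obtain ⟨j, hj⟩ := mem_powers_iff_mem_zpowers.mpr (inv_mem (Subgroup.mem_zpowers σ))
  exact hj ▸ h.pow j

theorem PreservesCycles.apply_eq_self (h : PreservesCycles v σ⁻¹) {k : α} (hk : v k = k) :
    v (σ k) = σ k := by
  have hcyc : v.SameCycle k (σ⁻¹ (v (σ k))) := by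
    simpa using h _ _ (SameCycle.refl v (σ k)).apply_right
  simpa using (congrArg σ (hcyc.eq_of_left hk)).symm

end PreservesCycles

def IsCoherent [LinearOrder α] (v : Perm α) : Prop :=
  ∀ k, k < v k ∨ (∀ l, v.SameCycle k l → l ≤ k) ∧ (∀ l, v.SameCycle k l → v k ≤ l)

theorem IsCoherent.not_lt_of_lt [LinearOrder α] [WellFoundedLT α] {v : Perm α}
    (hv : IsCoherent v) {k x : α} (hkx : v.SameCycle k x) (hk : k < x) : ¬ x < v k := by
  induction x using WellFoundedLT.induction generalizing k with
  | _ x ih =>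
    obtain ⟨y, rfl⟩ := v.surjective x
    intro hxv
    have hky : v.SameCycle k y := hkx.of_apply_right
    rcases hv y with hy | ⟨-, hmin⟩
    · rcases lt_trichotomy y k with hyk | rfl | hky'
      · exact ih k hk hky.symm hyk hk
      · exact hxv.false
      · exact ih y hy hky hky' (hy.trans hxv)
    · exact (hmin k hky.symm).not_gt hk

theorem IsCoherent.apply_sub_le_sub {n : ℕ} {v : Perm (Fin n)} (hv : IsCoherent v)
    {k x : Fin n} (hkx : v.SameCycle k x) (hxk : x ≠ k) : v k - k ≤ x - k := by
  rw [Fin.le_iff_val_le_val]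
  rcases hv k with hk | ⟨hmax, hmin⟩
  · rw [Fin.coe_sub_iff_le.mpr hk.le]
    rcases lt_or_gt_of_ne hxk with hx | hx
    · rw [Fin.coe_sub_iff_lt.mpr hx]
      omega
    · have hvx := not_lt.mp (hv.not_lt_of_lt hkx hx)
      rw [Fin.coe_sub_iff_le.mpr hx.le]
      omega
  · have hx : x < k := (hmax x hkx).lt_of_ne hxk
    have hvx := hmin x hkx
    rw [Fin.coe_sub_iff_lt.mpr (hvx.trans_lt hx), Fin.coe_sub_iff_lt.mpr hx]
    omega

theorem IsCoherent.apply_sub_self_le {n : ℕ} {v σ : Perm (Fin n)} (hv : IsCoherent v)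
    (hσ : ∀ x y, σ x - σ y = x - y) (hvσ : PreservesCycles v σ) {k : Fin n}
    (hk : v k ≠ k) : v (σ k) - σ k ≤ v k - k := by
  rw [← hσ (v k) k]
  exact hv.apply_sub_le_sub (hvσ _ _ (SameCycle.refl v k).apply_right) (σ.injective.ne hk)

theorem IsCoherent.commute {n : ℕ} [NeZero n] {v σ : Perm (Fin n)} (hv : IsCoherent v)
    (hσ : ∀ x y, σ x - σ y = x - y) (hvσ : PreservesCycles v σ) : Commute σ v := by
  have hσ' : ∀ x y, σ⁻¹ x - σ⁻¹ y = x - y := fun x y => by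
    simpa using (hσ (σ⁻¹ x) (σ⁻¹ y)).symm
  have hvσ' := hvσ.inv
  refine Equiv.ext fun k => ?_
  simp only [Perm.mul_apply]
  by_cases hk : v k = k
  · rw [hk, hvσ'.apply_eq_self hk]
  have hk' : v (σ k) ≠ σ k := fun h => hk <| by
    simpa using (inv_inv σ ▸ hvσ : PreservesCycles v σ⁻¹⁻¹).apply_eq_self h
  have h := le_antisymm (hv.apply_sub_self_le hσ hvσ hk)
    (by simpa using hv.apply_sub_self_le hσ' hvσ' hk')
  rw [← hσ (v k) k] at h
  exact (sub_left_inj.mp h).symm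

theorem finRotate_sub_finRotate {n : ℕ} (x y : Fin n) :
    finRotate n x - finRotate n y = x - y := by
  obtain _ | n := n
  · exact x.elim0
  simp only [finRotate_apply, add_sub_add_right_eq_sub]

theorem finRotate_pow_sub {n : ℕ} (m : ℕ) (x y : Fin n) :
    (finRotate n ^ m) x - (finRotate n ^ m) y = x - y := by
  induction m with
  | zero => rfl
  | succ m ih => rw [pow_succ', Perm.mul_apply, Perm.mul_apply, finRotate_sub_finRotate, ih]

end Semichart

open Semichart

theorem stmt18_general (n : ℕ) (v : Equiv.Perm (Fin n)) (S : Finset (Fin n))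
    (hcoh : ∀ k : Fin n, k < v k ∨
        ((∀ l, (∃ s : ℕ, (v ^ s) k = l) → l ≤ k) ∧
         (∀ l, (∃ s : ℕ, (v ^ s) k = l) → v k ≤ l))) :
    (∀ m : ℕ,
        (∀ k l : Fin n, (∃ s : ℕ, (v ^ s) k = l) →
          ∃ s : ℕ, (v ^ s) ((finRotate n ^ m) k) = (finRotate n ^ m) l) →
        S.image (finRotate n ^ m) = S →
        ∀ k, (finRotate n ^ m) (v k) = v ((finRotate n ^ m) k)) ∧
    ({m : ℕ | (∀ k l : Fin n, (∃ s : ℕ, (v ^ s) k = l) →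
          ∃ s : ℕ, (v ^ s) ((finRotate n ^ m) k) = (finRotate n ^ m) l) ∧
        S.image (finRotate n ^ m) = S} =
      {m : ℕ | (∀ k, (finRotate n ^ m) (v k) = v ((finRotate n ^ m) k)) ∧
        S.image (finRotate n ^ m) = S}) := by
  have hv : IsCoherent v := by
    simp only [exists_pow_apply_eq_iff_sameCycle] at hcoh
    exact hcoh
  have preserves_iff (m : ℕ) : (∀ k l : Fin n, (∃ s : ℕ, (v ^ s) k = l) →
      ∃ s : ℕ, (v ^ s) ((finRotate n ^ m) k) = (finRotate n ^ m) l) ↔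
      PreservesCycles v (finRotate n ^ m) := by
    simp only [exists_pow_apply_eq_iff_sameCycle]; rfl
  have commute (m : ℕ) (h : PreservesCycles v (finRotate n ^ m)) :
      Commute (finRotate n ^ m) v := by
    obtain _ | n := n
    · exact Subsingleton.elim (α := Equiv.Perm (Fin 0)) _ _
    exact hv.commute (finRotate_pow_sub m) h
  refine ⟨fun m h _ k => DFunLike.congr_fun (commute m ((preserves_iff m).mp h)) k, ?_⟩
  ext m
  simp only [Set.mem_ofPred_eq, preserves_iff]
  exact and_congr_left fun _ =>
    ⟨fun h k => DFunLike.congr_fun (commute m h) k,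
      fun h => preservesCycles_of_commute (Equiv.ext h)⟩

/-- let `(n,v,S)` be a coherent semichart (indices `Fin n` with their
order, circular permutation `ρ = finRotate n`).  If `ρ^m` maps `v`-orbits to `v`-orbits
and `ρ^m(S) = S`, then `ρ^m` commutes with `v`; consequently the automorphisms of the
semichart coincide with the automorphisms of the associated word,
i.e. `Aut(v,S) = Aut(W)`. -/
theorem stmt18 (n : ℕ) (hn : 1 ≤ n) (v : Equiv.Perm (Fin n)) (S : Finset (Fin n))
    (hsemi : ∀ a : Fin n, Odd (Set.ncard {x : Fin n | x ∈ S ∧ ∃ s : ℕ, (v ^ s) a = x}))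
    (hcoh : ∀ k : Fin n, k < v k ∨
        ((∀ l, (∃ s : ℕ, (v ^ s) k = l) → l ≤ k) ∧
         (∀ l, (∃ s : ℕ, (v ^ s) k = l) → v k ≤ l))) :
    (∀ m : ℕ,
        (∀ k l : Fin n, (∃ s : ℕ, (v ^ s) k = l) →
          ∃ s : ℕ, (v ^ s) ((finRotate n ^ m) k) = (finRotate n ^ m) l) →
        S.image (finRotate n ^ m) = S →
        ∀ k, (finRotate n ^ m) (v k) = v ((finRotate n ^ m) k)) ∧
    ({m : ℕ | (∀ k l : Fin n, (∃ s : ℕ, (v ^ s) k = l) →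
          ∃ s : ℕ, (v ^ s) ((finRotate n ^ m) k) = (finRotate n ^ m) l) ∧
        S.image (finRotate n ^ m) = S} =
      {m : ℕ | (∀ k, (finRotate n ^ m) (v k) = v ((finRotate n ^ m) k)) ∧
        S.image (finRotate n ^ m) = S}) :=
  stmt18_general n v S hcoh
end
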